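/- arXiv:0909.0035 — 2 statements merged into one kernel-verified Lean document; each statement's English description precedes it below -/
import Mathlib

section
/- In the ring of formal power series ℚ[[y₁,…,y_m]], the following identity holds: ∑_{j=0}^{2m} (−1)^j (j+1) · s_j(e^{y₁}, e^{−y₁}, …, e^{y_m}, e^{−y_m}) = (m+1) ∏_{j=1}^{m} (1 − e^{y_j})(1 − e^{−y_j}), where s_j denotes the j-th elementary symmetric polynomial in the 2m listed arguments. -/
/-!
Since `e^{y} e^{-y} = 1`, this is an instance of an identity valid in every commutative ring:
if `2m` elements come in `m` pairs `x, x'` with `x x' = 1`, then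
`∑_{S} (-1)^|S| (|S|+1) ∏_{S} x = (m+1) ∏ (1 - x)(1 - x')`.
Adjoining an element `a` turns the left side `W` into `(1 - a) W - a ∏ (1 - xᵢ)`, and this
recursion proves the identity by induction on the number of pairs.
-/

open Finset

/-- The formal exponential `e^{c·y_j}` in `ℚ[[y₁,…,y_m]]`: its coefficient at the
monomial `y_j^k` is `c^k/k!`, and it vanishes on monomials involving other variables. -/
noncomputable def expCMul {m : ℕ} (c : ℤ) (j : Fin m) : MvPowerSeries (Fin m) ℚ :=
  fun d => if d.support ⊆ {j} then (c : ℚ) ^ (d j) / (Nat.factorial (d j)) else 0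

theorem add_pow_div_factorial {K : Type*} [Field K] [CharZero K] (a b : K) (k : ℕ) :
    (a + b) ^ k / k.factorial
      = ∑ p ∈ antidiagonal k, a ^ p.1 / p.1.factorial * (b ^ p.2 / p.2.factorial) := by
  have h := congrArg (PowerSeries.coeff k) (PowerSeries.exp_mul_exp_eq_exp_add a b)
  simp only [PowerSeries.coeff_mul, PowerSeries.coeff_rescale, PowerSeries.coeff_exp] at h
  simpa [div_eq_mul_inv] using h.symm

section
variable {m : ℕ}

theorem coeff_expCMul (c : ℤ) (j : Fin m) (d : Fin m →₀ ℕ) :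
    MvPowerSeries.coeff d (expCMul c j)
      = if d.support ⊆ {j} then (c : ℚ) ^ d j / (d j).factorial else 0 := rfl

theorem expCMul_add (c c' : ℤ) (j : Fin m) :
    expCMul (c + c') j = expCMul c j * expCMul c' j := by
  ext d
  rw [MvPowerSeries.coeff_mul, coeff_expCMul]
  by_cases hd : d.support ⊆ {j}
  · obtain ⟨k, rfl⟩ := Finsupp.support_subset_singleton'.mp hd
    rw [Finsupp.antidiagonal_single, sum_map]
    simp only [Function.Embedding.coe_prodMap, Function.Embedding.coeFn_mk, Prod.map_fst,
      Prod.map_snd, coeff_expCMul, Finsupp.support_single_subset, if_true, Finsupp.single_eq_same,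
      Int.cast_add, add_pow_div_factorial]
  · refine (if_neg hd).trans (sum_eq_zero fun p hp => ?_).symm
    rw [HasAntidiagonal.mem_antidiagonal] at hp
    by_cases h₁ : p.1.support ⊆ {j}
    · have h₂ : ¬ p.2.support ⊆ {j} := fun h₂ =>
        hd (hp ▸ Finsupp.support_add.trans (union_subset h₁ h₂))
      rw [coeff_expCMul c', if_neg h₂, mul_zero]
    · rw [coeff_expCMul c, if_neg h₁, zero_mul]

theorem expCMul_zero (j : Fin m) : expCMul 0 j = 1 := by
  ext d
  rw [coeff_expCMul, MvPowerSeries.coeff_one]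
  by_cases hd : d.support ⊆ {j}
  · obtain ⟨k, rfl⟩ := Finsupp.support_subset_singleton'.mp hd
    cases k <;> simp
  · have hd₀ : d ≠ 0 := by rintro rfl; simp at hd
    rw [if_neg hd, if_neg hd₀]

theorem expCMul_one_mul_expCMul_neg_one (j : Fin m) : expCMul 1 j * expCMul (-1) j = 1 := by
  rw [← expCMul_add, add_neg_cancel, expCMul_zero]

end

section
variable {ι R : Type*} [CommRing R]

theorem sum_powerset_neg_one_pow_card_mul_prod [DecidableEq ι] (s : Finset ι) (x : ι → R) :
    ∑ S ∈ s.powerset, (-1) ^ #S * ∏ i ∈ S, x i = ∏ i ∈ s, (1 - x i) := by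
  simp [prod_sub]

/-- The value at `t = -1` of `d/dt [t ∏_{i ∈ s} (1 + t xᵢ)]`. -/
def altWeightedSum (s : Finset ι) (x : ι → R) : R :=
  ∑ S ∈ s.powerset, (-1) ^ #S * (#S + 1) * ∏ i ∈ S, x i

theorem sum_range_mul_sum_powersetCard_eq_altWeightedSum (s : Finset ι) (x : ι → R) :
    ∑ j ∈ range (#s + 1), (-1) ^ j * (j + 1) * ∑ S ∈ powersetCard j s, ∏ i ∈ S, x i
      = altWeightedSum s x := by
  rw [altWeightedSum, sum_powerset]
  refine sum_congr rfl fun j _ => ?_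
  rw [mul_sum]
  refine sum_congr rfl fun S hS => ?_
  rw [(mem_powersetCard.mp hS).2]

theorem altWeightedSum_insert [DecidableEq ι] {a : ι} {s : Finset ι} (ha : a ∉ s) (x : ι → R) :
    altWeightedSum (insert a s) x
      = (1 - x a) * altWeightedSum s x - x a * ∏ i ∈ s, (1 - x i) := by
  have hinsert : ∑ S ∈ s.powerset, (-1) ^ #(insert a S) * (#(insert a S) + 1) *
        ∏ i ∈ insert a S, x i
      = -x a * ∑ S ∈ s.powerset,
          ((-1) ^ #S * (#S + 1) * ∏ i ∈ S, x i + (-1) ^ #S * ∏ i ∈ S, x i) := by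
    rw [mul_sum]
    refine sum_congr rfl fun S hS => ?_
    have haS : a ∉ S := fun h => ha (mem_powerset.mp hS h)
    rw [card_insert_of_notMem haS, prod_insert haS]
    push_cast
    ring
  rw [altWeightedSum, altWeightedSum, sum_powerset_insert ha, hinsert, sum_add_distrib,
    sum_powerset_neg_one_pow_card_mul_prod]
  ring

/-- Adjoining a pair `a, a'` with `a a' = 1` multiplies both sides by `(1 - a)(1 - a')`, because
`a + a' - 2 a a' = -(1 - a)(1 - a')`. -/
theorem altWeightedSum_product_bool [DecidableEq ι] (t : Finset ι) (x : ι × Bool → R)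
    (hx : ∀ l ∈ t, x (l, true) * x (l, false) = 1) :
    altWeightedSum (t ×ˢ univ) x
      = (#t + 1) * ∏ l ∈ t, (1 - x (l, true)) * (1 - x (l, false)) := by
  induction t using Finset.induction_on with
  | empty => simp [altWeightedSum]
  | @insert a t ha ih =>
    have hpairs :
        insert a t ×ˢ (univ : Finset Bool) = insert (a, true) (insert (a, false) (t ×ˢ univ)) := by
      ext ⟨l, b⟩
      cases b <;> simp
    have hfalse : (a, false) ∉ t ×ˢ (univ : Finset Bool) := by simp [ha]
    have htrue : (a, true) ∉ insert (a, false) (t ×ˢ (univ : Finset Bool)) := by simp [ha]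
    have hprod : ∏ p ∈ t ×ˢ (univ : Finset Bool), (1 - x p)
        = ∏ l ∈ t, (1 - x (l, true)) * (1 - x (l, false)) := by
      simp only [prod_product, Fintype.prod_bool]
    rw [hpairs, altWeightedSum_insert htrue, altWeightedSum_insert hfalse, prod_insert hfalse,
      ih fun l hl => hx l (mem_insert_of_mem hl), hprod, card_insert_of_notMem ha,
      prod_insert ha]
    push_cast
    linear_combination
      (∏ l ∈ t, (1 - x (l, true)) * (1 - x (l, false))) * hx a (mem_insert_self a t)

end

/-- In `ℚ[[y₁,…,y_m]]` one has
`∑_{j=0}^{2m} (−1)ʲ(j+1)·s_j(e^{y₁},e^{−y₁},…,e^{y_m},e^{−y_m})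
  = (m+1)·∏_{j=1}^m (1−e^{y_j})(1−e^{−y_j})`,
where `s_j` is the `j`-th elementary symmetric polynomial of the `2m` listed
exponentials (indexed here by `Fin m × Bool`, with `true` standing for `+y` and
`false` for `−y`). -/
theorem stmt_3 (m : ℕ) :
    ∑ j ∈ range (2 * m + 1),
        (MvPowerSeries.C : ℚ →+* MvPowerSeries (Fin m) ℚ) ((-1 : ℚ) ^ j * (j + 1)) *
          ∑ S ∈ powersetCard j (univ : Finset (Fin m × Bool)),
            ∏ p ∈ S, expCMul (if p.2 then 1 else -1) p.1
      = (MvPowerSeries.C : ℚ →+* MvPowerSeries (Fin m) ℚ) (m + 1) *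
          ∏ l : Fin m, (1 - expCMul 1 l) * (1 - expCMul (-1) l) := by
  have hcard : #(univ : Finset (Fin m × Bool)) = 2 * m := by simp [mul_comm]
  simp only [map_mul, map_pow, map_neg, map_one, map_add, map_natCast]
  rw [← hcard, sum_range_mul_sum_powersetCard_eq_altWeightedSum, ← univ_product_univ,
    altWeightedSum_product_bool _ _ fun l _ => by simpa using expCMul_one_mul_expCMul_neg_one l]
  simp
end

section
/- Suppose i₀, i₁, P, Q, R, S are integers (representing ind D₀, ind D₁, p₁²[M], p₁q₁[M], p₂[M], q₁²[M]) satisfying i₀ = (7/1920)P − (1/24)Q − (1/480)R + (1/12)S and i₁ = (209/1920)P + (11/24)Q − (167/480)R + (25/12)S in ℚ. Then (143/960)P − (89/240)R and −(17/480)P + (71/120)R are both integers. -/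
/-- Integrality conditions for 8-dimensional compact quaternionic manifolds: if the two
index values `i₀, i₁` and the characteristic numbers `P = p₁²[M]`, `Q = p₁q₁[M]`,
`R = p₂[M]`, `S = q₁²[M]` are integers satisfying the two index formulas, then
`(143/960)P − (89/240)R` and `−(17/480)P + (71/120)R` are integers. -/
theorem stmt_15 (i₀ i₁ P Q R S : ℤ)
    (h₀ : (i₀ : ℚ) = (7 / 1920) * P - (1 / 24) * Q - (1 / 480) * R + (1 / 12) * S)
    (h₁ : (i₁ : ℚ) = (209 / 1920) * P + (11 / 24) * Q - (167 / 480) * R + (25 / 12) * S) :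
    (∃ n : ℤ, (143 / 960 : ℚ) * P - (89 / 240) * R = n) ∧
    (∃ n : ℤ, -(17 / 480 : ℚ) * P + (71 / 120) * R = n) := by
  constructor
  · exact ⟨11 * i₀ + i₁ - 3 * S, by push_cast; linarith⟩
  · exact ⟨50 * i₀ - 2 * i₁ + 3 * Q, by push_cast; linarith⟩
end
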